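/- Let T ∈ B(H) satisfy T H ⊆ (ker T)^⊥ ⊆ T* H. Then for every Hilbert space E and every X ∈ B(H, E), writing X₁ = X P_{(ker T)^⊥} and X₂ = X P_{ker T}, one has: X₁ = LT for some bounded L : H → E, and X₂ T^k = 0 for every k ≥ 1. In particular B(H,E) = B(H,E)T + Z_E(T), where Z_E(T) = {Y ∈ B(H,E) : Σ_{n≥0} ‖Y Tⁿ h‖² ≤ c‖h‖² for some c > 0 and all h}. -/

import Mathlib

open scoped ENNReal

noncomputable section

/-- The set `Z_E(T)` of bounded operators `Y : H → E` for which there is `c > 0` with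
`Σ_{n=0}^∞ ‖Y Tⁿ h‖² ≤ c ‖h‖²` for all `h ∈ H`. -/
def Zset {H E : Type*}
    [NormedAddCommGroup H] [InnerProductSpace ℂ H] [CompleteSpace H]
    [NormedAddCommGroup E] [InnerProductSpace ℂ E] [CompleteSpace E]
    (T : H →L[ℂ] H) : Set (H →L[ℂ] E) :=
  {Y | ∃ c > (0 : ℝ), ∀ h : H,
    ∑' n : ℕ, (‖Y ((T ^ n) h)‖₊ : ℝ≥0∞) ^ 2 ≤ ENNReal.ofReal (c * ‖h‖ ^ 2)}

/-! Put `M = (ker T)ᗮ`. The adjoint `(X P_M)* = P_M X*` has range inside `M ⊆ ran T*`, so Douglas's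
lemma gives `X P_M = L T`. (Douglas's lemma: if `ran A* ⊆ ran B*`, sending `e` to the preimage of
`A* e` under `B*` lying in `(ker B*)ᗮ` is a linear map with closed graph, hence a bounded `K` with
`B* K = A*`; take `L = K*`.) Since `ran T ⊆ M`, `P_{ker T} T = 0`, so `X₂ = X P_{ker T}` kills `Tᵏ`
for `k ≥ 1`; only the term `n = 0` of the series defining `Z_E(T)` survives, and `X = L T + X₂`. -/

open scoped InnerProduct

namespace ContinuousLinearMap

variable {𝕜 E F H : Type*} [RCLike 𝕜]

section Factorization

variable [NormedAddCommGroup E] [NormedSpace 𝕜 E]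
  [NormedAddCommGroup F] [InnerProductSpace 𝕜 F]
  [NormedAddCommGroup H] [NormedSpace 𝕜 H]

lemma injective_domRestrict_orthogonal_ker (S : F →L[𝕜] H) :
    Function.Injective ((S : F →ₗ[𝕜] H).domRestrict S.kerᗮ) :=
  LinearMap.injective_domRestrict_iff.mpr S.ker.orthogonal_disjoint.symm

lemma range_domRestrict_orthogonal_ker [CompleteSpace F] (S : F →L[𝕜] H) :
    LinearMap.range ((S : F →ₗ[𝕜] H).domRestrict S.kerᗮ) = S.range := by
  rw [LinearMap.range_domRestrict, Submodule.map_eq_range_iff]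
  exact S.ker.isCompl_orthogonal.symm.codisjoint

theorem exists_comp_eq_of_range_le [CompleteSpace E] [CompleteSpace F] {S : F →L[𝕜] H}
    {R : E →L[𝕜] H} (h : R.range ≤ S.range) : ∃ K : E →L[𝕜] F, S ∘L K = R := by
  set N := S.kerᗮ
  let e := LinearEquiv.ofInjective _ S.injective_domRestrict_orthogonal_ker
  let K₀ : E →ₗ[𝕜] F := N.subtype ∘ₗ e.symm.toLinearMap ∘ₗ
    (R : E →ₗ[𝕜] H).codRestrict _ (fun x => S.range_domRestrict_orthogonal_ker ▸ h ⟨x, rfl⟩)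
  have hK₀N : ∀ x, K₀ x ∈ N := fun x => (e.symm _).2
  have hSK₀ : ∀ x, S (K₀ x) = R x := fun x => congrArg Subtype.val (e.apply_symm_apply _)
  have hK₀ : Continuous K₀ := by
    refine K₀.continuous_of_seq_closed_graph fun u x y hu hKu => ?_
    have hyN : y ∈ N :=
      S.ker.isClosed_orthogonal.mem_of_tendsto hKu (.of_forall fun n => hK₀N _)
    have hSy : S y = S (K₀ x) := by
      rw [hSK₀]
      refine tendsto_nhds_unique ((S.continuous.tendsto y).comp hKu) ?_
      simpa [Function.comp_def, hSK₀] using (R.continuous.tendsto x).comp hu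
    exact congrArg Subtype.val
      (S.injective_domRestrict_orthogonal_ker (a₁ := ⟨y, hyN⟩) (a₂ := ⟨K₀ x, hK₀N x⟩) hSy)
  exact ⟨⟨K₀, hK₀⟩, ext hSK₀⟩

end Factorization

section Douglas

variable [NormedAddCommGroup E] [InnerProductSpace 𝕜 E] [CompleteSpace E]
  [NormedAddCommGroup F] [InnerProductSpace 𝕜 F] [CompleteSpace F]
  [NormedAddCommGroup H] [InnerProductSpace 𝕜 H] [CompleteSpace H]

theorem exists_eq_comp_of_range_adjoint_le {A : H →L[𝕜] E} {B : H →L[𝕜] F}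
    (h : A†.range ≤ B†.range) : ∃ L : F →L[𝕜] E, A = L ∘L B := by
  obtain ⟨K, hK⟩ := exists_comp_eq_of_range_le h
  refine ⟨K†, ?_⟩
  rw [← adjoint_adjoint A, ← hK, adjoint_comp, adjoint_adjoint]

theorem exists_comp_starProjection_orthogonal_ker_eq_comp {T : H →L[𝕜] F}
    (hT : T.kerᗮ ≤ T†.range) (X : H →L[𝕜] E) :
    ∃ L : F →L[𝕜] E, X ∘L T.kerᗮ.starProjection = L ∘L T := by
  refine exists_eq_comp_of_range_adjoint_le (le_trans ?_ hT)
  rw [adjoint_comp, (isSelfAdjoint_starProjection _).adjoint_eq, toLinearMap_comp]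
  exact (LinearMap.range_comp_le_range _ _).trans (Submodule.range_starProjection _).le

end Douglas

end ContinuousLinearMap

theorem Submodule.starProjection_comp_pow_eq_zero {𝕜 H : Type*} [RCLike 𝕜]
    [NormedAddCommGroup H] [InnerProductSpace 𝕜 H] {U : Submodule 𝕜 H}
    [U.HasOrthogonalProjection] {T : H →L[𝕜] H} (hT : ∀ x, T x ∈ Uᗮ) {k : ℕ} (hk : 1 ≤ k) :
    U.starProjection ∘L T ^ k = 0 := by
  obtain ⟨j, rfl⟩ := Nat.exists_eq_add_of_le' hk
  have hPT : U.starProjection ∘L T = 0 :=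
    ContinuousLinearMap.ext fun x => U.starProjection_apply_eq_zero_iff.mpr (hT x)
  rw [pow_succ', ContinuousLinearMap.mul_def, ← ContinuousLinearMap.comp_assoc, hPT,
    ContinuousLinearMap.zero_comp]

theorem mem_Zset_of_comp_pow_eq_zero {H E : Type*}
    [NormedAddCommGroup H] [InnerProductSpace ℂ H] [CompleteSpace H]
    [NormedAddCommGroup E] [InnerProductSpace ℂ E] [CompleteSpace E]
    {T : H →L[ℂ] H} {Y : H →L[ℂ] E} (hY : ∀ k, 1 ≤ k → Y ∘L T ^ k = 0) : Y ∈ Zset T := by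
  refine ⟨‖Y‖ ^ 2 + 1, by positivity, fun h => ?_⟩
  have hterm : ∀ n ≠ 0, (‖Y ((T ^ n) h)‖₊ : ℝ≥0∞) ^ 2 = 0 := fun n hn => by
    rw [← ContinuousLinearMap.comp_apply, hY n (Nat.one_le_iff_ne_zero.mpr hn)]
    simp
  rw [tsum_eq_single 0 hterm, pow_zero, one_apply_eq_self,
    ← enorm_eq_nnnorm, ← ofReal_norm, ← ENNReal.ofReal_pow (norm_nonneg _)]
  refine ENNReal.ofReal_le_ofReal ?_
  nlinarith [Y.le_opNorm h, norm_nonneg (Y h), norm_nonneg Y, sq_nonneg ‖h‖]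

theorem decomposition_selfadjoint_like {H E : Type*}
    [NormedAddCommGroup H] [InnerProductSpace ℂ H] [CompleteSpace H]
    [NormedAddCommGroup E] [InnerProductSpace ℂ E] [CompleteSpace E]
    (T : H →L[ℂ] H)
    (h1 : ∀ h : H, T h ∈ (LinearMap.ker (T : H →ₗ[ℂ] H))ᗮ)
    (h2 : ((LinearMap.ker (T : H →ₗ[ℂ] H))ᗮ : Set H) ⊆ Set.range (ContinuousLinearMap.adjoint T)) :
    ∀ X : H →L[ℂ] E,
      (∃ L : H →L[ℂ] E,
          X.comp (((LinearMap.ker (T : H →ₗ[ℂ] H))ᗮ).subtypeL.comp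
            (Submodule.orthogonalProjectionOnto (LinearMap.ker (T : H →ₗ[ℂ] H))ᗮ)) = L.comp T) ∧
      (∀ k : ℕ, 1 ≤ k →
          (X.comp ((LinearMap.ker (T : H →ₗ[ℂ] H)).subtypeL.comp
            (Submodule.orthogonalProjectionOnto (LinearMap.ker (T : H →ₗ[ℂ] H))))).comp (T ^ k) = 0) ∧
      (∃ L : H →L[ℂ] E, ∃ Y ∈ Zset T, X = L.comp T + Y) := by
  intro X
  obtain ⟨L, hL⟩ := ContinuousLinearMap.exists_comp_starProjection_orthogonal_ker_eq_comp
    (fun x hx => h2 hx) X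
  have hX₂ : ∀ k, 1 ≤ k → (X ∘L (T : H →ₗ[ℂ] H).ker.starProjection) ∘L T ^ k = 0 :=
    fun k hk => by
      rw [ContinuousLinearMap.comp_assoc, Submodule.starProjection_comp_pow_eq_zero h1 hk,
        ContinuousLinearMap.comp_zero]
  refine ⟨⟨L, hL⟩, hX₂, L, _, mem_Zset_of_comp_pow_eq_zero hX₂, ?_⟩
  rw [← hL, ← ContinuousLinearMap.comp_add, Submodule.starProjection_orthogonal',
    sub_add_cancel]
  exact X.comp_id.symm
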